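/- Let g : ℝ≥0 → ℝ be defined by g(p) = (a² p + q) r / (a² p + q + r) with q > 0, r > 0, a ∈ ℝ. Then g is monotone nondecreasing on [0, ∞), and if |a| < 1 then g has a unique fixed point p* ≥ 0 (the unique nonnegative root of a² p² + (q + r − a² r) p − q r = 0). -/

import Mathlib

/-!
Writing `g p = r - r² / (a² p + q + r)` shows that `g` is nondecreasing wherever the
denominator stays positive. Clearing the denominator turns `g p = p` into the quadratic
`a² p² + (q + (1 - a²) r) p - q r = 0`; for `|a| < 1` its linear coefficient is positive, so the
quadratic increases strictly on `[0, ∞)` from `-q r ≤ 0`, and has exactly one nonnegative root.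
-/

section Quadratic

variable {α β γ : ℝ}

lemma strictMonoOn_quadratic_Ici (hα : 0 ≤ α) (hβ : 0 < β) :
    StrictMonoOn (fun x : ℝ => α * x ^ 2 + β * x - γ) (Set.Ici 0) := by
  intro x hx y hy hxy
  simp only [Set.mem_Ici] at hx hy
  nlinarith [mul_nonneg hα (add_nonneg hx hy)]

lemma exists_nonneg_root_quadratic (hα : 0 ≤ α) (hβ : 0 < β) (hγ : 0 ≤ γ) :
    ∃ x, 0 ≤ x ∧ α * x ^ 2 + β * x - γ = 0 := by
  have hbound : 0 ≤ γ / β := div_nonneg hγ hβ.le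
  have hcont : ContinuousOn (fun x : ℝ => α * x ^ 2 + β * x - γ) (Set.Icc 0 (γ / β)) := by
    fun_prop
  have hsign : (0 : ℝ) ∈ Set.Icc (α * 0 ^ 2 + β * 0 - γ) (α * (γ / β) ^ 2 + β * (γ / β) - γ) := by
    rw [mul_div_cancel₀ γ hβ.ne', add_sub_cancel_right]
    exact ⟨by simpa using hγ, by positivity⟩
  obtain ⟨x, hx, hroot⟩ := intermediate_value_Icc hbound hcont hsign
  exact ⟨x, hx.1, hroot⟩

lemma existsUnique_nonneg_root_quadratic (hα : 0 ≤ α) (hβ : 0 < β) (hγ : 0 ≤ γ) :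
    ∃! x, 0 ≤ x ∧ α * x ^ 2 + β * x - γ = 0 := by
  obtain ⟨x, hx, hroot⟩ := exists_nonneg_root_quadratic hα hβ hγ
  refine ⟨x, ⟨hx, hroot⟩, fun y ⟨hy, hroot'⟩ => ?_⟩
  exact (strictMonoOn_quadratic_Ici hα hβ).injOn hy hx (hroot'.trans hroot.symm)

end Quadratic

section Riccati

variable {a q r p : ℝ}

lemma riccati_denom_pos (hqr : 0 < q + r) (hp : 0 ≤ p) : 0 < a ^ 2 * p + q + r := by
  have := mul_nonneg (sq_nonneg a) hp
  linarith

lemma riccati_eq_sub_div (hden : a ^ 2 * p + q + r ≠ 0) :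
    (a ^ 2 * p + q) * r / (a ^ 2 * p + q + r) = r - r ^ 2 / (a ^ 2 * p + q + r) := by
  field_simp
  ring

lemma monotoneOn_riccati (hqr : 0 < q + r) :
    MonotoneOn (fun p : ℝ => (a ^ 2 * p + q) * r / (a ^ 2 * p + q + r)) (Set.Ici 0) := by
  intro x hx y hy hxy
  have hx' := riccati_denom_pos (a := a) hqr hx
  have hy' := riccati_denom_pos (a := a) hqr hy
  simp only
  rw [riccati_eq_sub_div hx'.ne', riccati_eq_sub_div hy'.ne']
  gcongr

lemma riccati_eq_self_iff (hden : a ^ 2 * p + q + r ≠ 0) :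
    (a ^ 2 * p + q) * r / (a ^ 2 * p + q + r) = p ↔
      a ^ 2 * p ^ 2 + (q + r - a ^ 2 * r) * p - q * r = 0 := by
  rw [div_eq_iff hden]
  constructor <;> intro h <;> linear_combination -h

end Riccati

/-- The scalar Riccati map g(p) = (a²p+q)r/(a²p+q+r) is monotone nondecreasing
on [0,∞), and for |a| < 1 has a unique nonnegative fixed point, characterized
as the unique nonnegative root of a²p² + (q + r − a²r)p − qr = 0. -/
theorem riccati_map_monotone_fixed_point (a q r : ℝ) (hq : 0 < q) (hr : 0 < r)
    (g : ℝ → ℝ)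
    (hg : ∀ p, g p = (a ^ 2 * p + q) * r / (a ^ 2 * p + q + r)) :
    MonotoneOn g (Set.Ici 0) ∧
    (|a| < 1 →
      (∃! p : ℝ, 0 ≤ p ∧ g p = p) ∧
      ∀ p : ℝ, 0 ≤ p →
        (g p = p ↔ a ^ 2 * p ^ 2 + (q + r - a ^ 2 * r) * p - q * r = 0)) := by
  obtain rfl : g = fun p => (a ^ 2 * p + q) * r / (a ^ 2 * p + q + r) := funext hg
  have hqr : 0 < q + r := add_pos hq hr
  refine ⟨monotoneOn_riccati hqr, fun ha => ?_⟩
  have hiff : ∀ p : ℝ, 0 ≤ p →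
      ((a ^ 2 * p + q) * r / (a ^ 2 * p + q + r) = p ↔
        a ^ 2 * p ^ 2 + (q + r - a ^ 2 * r) * p - q * r = 0) :=
    fun p hp => riccati_eq_self_iff (riccati_denom_pos hqr hp).ne'
  have hlin : 0 < q + r - a ^ 2 * r := by
    have ha2 : a ^ 2 < 1 := sq_lt_one_iff_abs_lt_one a |>.2 ha
    nlinarith
  have hroot := existsUnique_nonneg_root_quadratic (sq_nonneg a) hlin (mul_pos hq hr).le
  exact ⟨(existsUnique_congr fun p => and_congr_right (hiff p)).2 hroot, hiff⟩
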